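/- Let G' and G be groups, p : G' → G a surjective group homomorphism, s : G → G' a set-theoretic section of p (i.e. p(s(x)) = x for all x ∈ G), A an abelian group written additively, and ⟨·,·⟩ : G' × G' → A a map satisfying ⟨xy,z⟩ = ⟨x,z⟩ + ⟨y,z⟩ and ⟨x,yz⟩ = ⟨x,y⟩ + ⟨x,z⟩ for all x,y,z ∈ G', and such that ⟨x,y⟩ = 0 whenever x,y ∈ ker(p). Define α : G × G × G → A by α(x,y,z) = ⟨s(x), s(y)·s(z)·s(yz)⁻¹⟩. Then α is a 3-cocycle: for all x,y,z,t ∈ G, α(y,z,t) − α(xy,z,t) + α(x,yz,t) − α(x,y,zt) + α(x,y,z) = 0. -/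

import Mathlib

/-!
Write `f(a, b) = s a · s b · s(ab)⁻¹ ∈ ker p` for the factor set of the section, so that
`α(x, y, z) = ⟨s x, f(y, z)⟩`. Since `s(xy) = f(x, y)⁻¹ · s x · s y` and `⟨·,·⟩` vanishes on
`ker p × ker p`, the first argument of `α` is additive: `α(xy, z, t) = α(x, z, t) + α(y, z, t)`.
The factor set satisfies the twisted cocycle identity
`f(y, z) · f(yz, t) = s y · f(z, t) · (s y)⁻¹ · f(y, zt)`, and `⟨s x, ·⟩` is a homomorphism to an
abelian group, hence kills the conjugation; the remaining four terms then cancel.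
-/

section AdditiveOfMul

variable {M A : Type*} [Group M] [AddCommGroup A] {f : M → A}

theorem map_one_eq_zero_of_map_mul (hf : ∀ a b, f (a * b) = f a + f b) : f 1 = 0 := by
  simpa using hf 1 1

theorem map_conj_eq_of_map_mul (hf : ∀ a b, f (a * b) = f a + f b) (g k : M) :
    f (g * k * g⁻¹) = f k := by
  have hg : f g + f g⁻¹ = 0 := by rw [← hf, mul_inv_cancel, map_one_eq_zero_of_map_mul hf]
  rw [hf, hf]
  linear_combination (norm := abel) hg

end AdditiveOfMul

section FactorSet

variable {G' G : Type*} [Group G'] [Group G]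

def factorSet (s : G → G') (a b : G) : G' := s a * s b * (s (a * b))⁻¹

theorem factorSet_mem_ker {p : G' →* G} {s : G → G'} (hs : ∀ x, p (s x) = x) (a b : G) :
    factorSet s a b ∈ p.ker := by
  simp only [factorSet, MonoidHom.mem_ker, map_mul, map_inv, hs]
  group

theorem section_mul_eq_inv_factorSet_mul (s : G → G') (a b : G) :
    s (a * b) = (factorSet s a b)⁻¹ * (s a * s b) := by
  simp only [factorSet]
  group

theorem factorSet_mul_factorSet (s : G → G') (y z t : G) :
    factorSet s y z * factorSet s (y * z) t =
      s y * factorSet s z t * (s y)⁻¹ * factorSet s y (z * t) := by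
  simp only [factorSet, mul_assoc y z t]
  group

end FactorSet

theorem braid_bracket_three_cocycle_general {G' G A : Type*} [Group G'] [Group G] [AddCommGroup A]
    (p : G' →* G)
    (s : G → G') (hs : ∀ x : G, p (s x) = x)
    (br : G' → G' → A)
    (h1 : ∀ x y z : G', br (x * y) z = br x z + br y z)
    (h2 : ∀ x y z : G', br x (y * z) = br x y + br x z)
    (hker : ∀ x y : G', x ∈ p.ker → y ∈ p.ker → br x y = 0)
    (α : G → G → G → A)
    (hα : ∀ x y z : G, α x y z = br (s x) (s y * s z * (s (y * z))⁻¹)) :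
    ∀ x y z t : G,
      α y z t - α (x * y) z t + α x (y * z) t - α x y (z * t) + α x y z = 0 := by
  intro x y z t
  replace hα : ∀ a b c, α a b c = br (s a) (factorSet s b c) := hα
  have hα_mul_left : α (x * y) z t = α x z t + α y z t := by
    rw [hα, hα, hα, section_mul_eq_inv_factorSet_mul s x y, h1, h1,
      hker _ _ (inv_mem (factorSet_mem_ker hs x y)) (factorSet_mem_ker hs z t), zero_add]
  have hcocycle : br (s x) (factorSet s y z) + br (s x) (factorSet s (y * z) t) =
      br (s x) (factorSet s z t) + br (s x) (factorSet s y (z * t)) := by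
    rw [← h2, factorSet_mul_factorSet, h2, map_conj_eq_of_map_mul (h2 (s x))]
  rw [hα_mul_left]
  simp only [hα]
  linear_combination (norm := abel) hcocycle

/-- If `p : G' → G` is a surjective group homomorphism with set-theoretic
section `s`, and `⟨·,·⟩ : G' × G' → A` is biadditive (multiplicatively in its arguments)
and vanishes on `ker p × ker p`, then `α(x,y,z) = ⟨s x, s y · s z · s(yz)⁻¹⟩` is a
3-cocycle on `G` with values in `A` (trivial action). -/
theorem braid_bracket_three_cocycle {G' G A : Type*} [Group G'] [Group G] [AddCommGroup A]
    (p : G' →* G) (hp : Function.Surjective p)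
    (s : G → G') (hs : ∀ x : G, p (s x) = x)
    (br : G' → G' → A)
    (h1 : ∀ x y z : G', br (x * y) z = br x z + br y z)
    (h2 : ∀ x y z : G', br x (y * z) = br x y + br x z)
    (hker : ∀ x y : G', x ∈ p.ker → y ∈ p.ker → br x y = 0)
    (α : G → G → G → A)
    (hα : ∀ x y z : G, α x y z = br (s x) (s y * s z * (s (y * z))⁻¹)) :
    ∀ x y z t : G,
      α y z t - α (x * y) z t + α x (y * z) t - α x y (z * t) + α x y z = 0 :=
  braid_bracket_three_cocycle_general p s hs br h1 h2 hker α hα
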